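/- arXiv:1911.04770 — 2 statements merged into one kernel-verified Lean document; each statement's English description precedes it below -/
import Mathlib

section
/- Second half of Proposition 2 (recovering the constraint from the systems): Let u, y : ℝ × ℝ → ℝ be smooth functions satisfying both equations of system (Dx) and both equations of system (Dt) on ℝ × ℝ. Define v := y − 3t(u_xx + 3u²) − xu + 2(6tu + x). Then v_x = u, v_t = u_xx + 3u², and (u,v) satisfies equation (eqt) with parameters k1 = −4, k2 = 0. -/
/-- Partial derivative in the first (space) variable. -/
noncomputable def dx (f : ℝ → ℝ → ℝ) : ℝ → ℝ → ℝ := fun x t => deriv (fun x' => f x' t) x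

/-- Partial derivative in the second (time) variable. -/
noncomputable def dt (f : ℝ → ℝ → ℝ) : ℝ → ℝ → ℝ := fun x t => deriv (fun t' => f x t') t

/-- The KdV equation `u_t = u_xxx + 6 u u_x`. -/
def KdV (u : ℝ → ℝ → ℝ) : Prop :=
  ∀ x t, dt u x t = dx (dx (dx u)) x t + 6 * u x t * dx u x t

/-- `v` is the potential of `u`: `v_x = u`, `v_t = u_xx + 3 u²`. -/
def Potential (u v : ℝ → ℝ → ℝ) : Prop :=
  ∀ x t, dx v x t = u x t ∧ dt v x t = dx (dx u) x t + 3 * (u x t) ^ 2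

/-- Equation (eqt): the stationary equation for the linear combination
`u_{τ5} + k1 u_{τ3} + k2 u_{τ1}` of nonautonomous symmetries of KdV. -/
def Eqt (k1 k2 : ℝ) (u v : ℝ → ℝ → ℝ) : Prop :=
  ∀ x t,
    3 * t * dx (fun x t => dx (dx (dx (dx u))) x t + 10 * u x t * dx (dx u) x t
        + 5 * (dx u x t) ^ 2 + 10 * (u x t) ^ 3) x t
    + x * dx (fun x t => dx (dx u) x t + 3 * (u x t) ^ 2) x t
    + 4 * dx (dx u) x t + 8 * (u x t) ^ 2 + 2 * dx u x t * v x t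
    + k1 * (3 * t * dx (fun x t => dx (dx u) x t + 3 * (u x t) ^ 2) x t
        + x * dx u x t + 2 * u x t)
    + k2 * (6 * t * dx u x t + 1) = 0

/-- Pointwise form of system (Dx): the stationary equation and the equation for `y`. -/
def DxEqAt (u y : ℝ → ℝ → ℝ) (x t : ℝ) : Prop :=
  3 * t * (dx (dx (dx u)) x t + 6 * u x t * dx u x t - 4 * dx u x t)
      + x * dx u x t + 2 * u x t - dx y x t - 2 = 0 ∧
  dx (dx (dx y)) x t + 4 * u x t * dx y x t + 2 * dx u x t * y x t = 0

/-- Pointwise form of system (Dt): the KdV flow for `u` and the induced flow for `y`. -/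
def DtEqAt (u y : ℝ → ℝ → ℝ) (x t : ℝ) : Prop :=
  dt u x t = dx (dx (dx u)) x t + 6 * u x t * dx u x t ∧
  dt y x t = 2 * u x t * dx y x t - 2 * dx u x t * y x t

/-- The first integral `H0 = 2 y y_xx - y_x² + 4 u y²`. -/
noncomputable def H0expr (u y : ℝ → ℝ → ℝ) : ℝ → ℝ → ℝ := fun x t =>
  2 * y x t * dx (dx y) x t - (dx y x t) ^ 2 + 4 * u x t * (y x t) ^ 2

/-- The function `z = 12 t u + 2 x + y`. -/
noncomputable def zfun (u y : ℝ → ℝ → ℝ) : ℝ → ℝ → ℝ := fun x t =>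
  12 * t * u x t + 2 * x + y x t

/-- The first integral `H1 = 2 z z_xx - z_x² + 4 (u - 1) z²` with `z = 12 t u + 2 x + y`. -/
noncomputable def H1expr (u y : ℝ → ℝ → ℝ) : ℝ → ℝ → ℝ := fun x t =>
  2 * zfun u y x t * dx (dx (zfun u y)) x t - (dx (zfun u y) x t) ^ 2
    + 4 * (u x t - 1) * (zfun u y x t) ^ 2


open scoped ContDiff
open Function

lemma sliceX {f : ℝ → ℝ → ℝ} (hf : ContDiff ℝ ∞ (uncurry f)) (t : ℝ) :
    ContDiff ℝ ∞ (fun x => f x t) := hf.comp (contDiff_id.prodMk contDiff_const)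

lemma sliceT {f : ℝ → ℝ → ℝ} (hf : ContDiff ℝ ∞ (uncurry f)) (x : ℝ) :
    ContDiff ℝ ∞ (fun t => f x t) := hf.comp (contDiff_const.prodMk contDiff_id)

lemma hasDerivAtX {f : ℝ → ℝ → ℝ} (hf : ContDiff ℝ ∞ (uncurry f)) (x t : ℝ) :
    HasDerivAt (fun x' => f x' t) (fderiv ℝ (uncurry f) (x, t) (1, 0)) x := by
  have h1 : HasFDerivAt (uncurry f) (fderiv ℝ (uncurry f) (x, t)) (x, t) :=
    (hf.differentiable (by norm_num) (x, t)).hasFDerivAt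
  have h2 : HasDerivAt (fun x' : ℝ => (x', t)) ((1 : ℝ), (0 : ℝ)) x :=
    (hasDerivAt_id x).prodMk (hasDerivAt_const x t)
  exact h1.comp_hasDerivAt x h2

lemma hasDerivAtT {f : ℝ → ℝ → ℝ} (hf : ContDiff ℝ ∞ (uncurry f)) (x t : ℝ) :
    HasDerivAt (fun t' => f x t') (fderiv ℝ (uncurry f) (x, t) (0, 1)) t := by
  have h1 : HasFDerivAt (uncurry f) (fderiv ℝ (uncurry f) (x, t)) (x, t) :=
    (hf.differentiable (by norm_num) (x, t)).hasFDerivAt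
  have h2 : HasDerivAt (fun t' : ℝ => (x, t')) ((0 : ℝ), (1 : ℝ)) t :=
    (hasDerivAt_const t x).prodMk (hasDerivAt_id t)
  exact h1.comp_hasDerivAt t h2

lemma dx_eq {f : ℝ → ℝ → ℝ} (hf : ContDiff ℝ ∞ (uncurry f)) (x t : ℝ) :
    dx f x t = fderiv ℝ (uncurry f) (x, t) (1, 0) := (hasDerivAtX hf x t).deriv

lemma dt_eq {f : ℝ → ℝ → ℝ} (hf : ContDiff ℝ ∞ (uncurry f)) (x t : ℝ) :
    dt f x t = fderiv ℝ (uncurry f) (x, t) (0, 1) := (hasDerivAtT hf x t).deriv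

lemma contDiff_dx {f : ℝ → ℝ → ℝ} (hf : ContDiff ℝ ∞ (uncurry f)) :
    ContDiff ℝ ∞ (uncurry (dx f)) := by
  have h : uncurry (dx f) = fun p : ℝ × ℝ => fderiv ℝ (uncurry f) p ((1 : ℝ), (0 : ℝ)) := by
    funext p
    exact dx_eq hf p.1 p.2
  rw [h]
  exact (hf.fderiv_right (by norm_num)).clm_apply contDiff_const


lemma clairaut {f : ℝ → ℝ → ℝ} (hf : ContDiff ℝ ∞ (uncurry f)) (x t : ℝ) :
    dt (dx f) x t = dx (dt f) x t := by
  set F := uncurry f with hF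
  have hfd : ContDiff ℝ ∞ (fderiv ℝ F) := hf.fderiv_right (by norm_num)
  have hF'' : HasFDerivAt (fderiv ℝ F) (fderiv ℝ (fderiv ℝ F) (x, t)) (x, t) :=
    (hfd.differentiable (by norm_num) (x, t)).hasFDerivAt
  have hsymm := second_derivative_symmetric (f := F) (f' := fderiv ℝ F)
    (fun p => (hf.differentiable (by norm_num) p).hasFDerivAt) hF''
    ((1 : ℝ), (0 : ℝ)) ((0 : ℝ), (1 : ℝ))
  -- g v := fun p => fderiv F p v has fderiv (apply v).comp F''
  have key : ∀ v : ℝ × ℝ,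
      HasFDerivAt (fun p => fderiv ℝ F p v)
        ((ContinuousLinearMap.apply ℝ ℝ v).comp (fderiv ℝ (fderiv ℝ F) (x, t))) (x, t) :=
    fun v => (ContinuousLinearMap.apply ℝ ℝ v).hasFDerivAt.comp (x, t) hF''
  -- dx f x' t' = fun p => fderiv F p (1,0)
  have hdx : dx f = fun x' t' => fderiv ℝ F (x', t') (1, 0) := by
    funext x' t'
    show deriv (fun a => f a t') x' = _
    refine HasDerivAt.deriv ?_
    exact ((hf.differentiable (by norm_num) (x', t')).hasFDerivAt).comp_hasDerivAt x'
      ((hasDerivAt_id x').prodMk (hasDerivAt_const x' t'))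
  have hdt : dt f = fun x' t' => fderiv ℝ F (x', t') (0, 1) := by
    funext x' t'
    show deriv (fun a => f x' a) t' = _
    refine HasDerivAt.deriv ?_
    exact ((hf.differentiable (by norm_num) (x', t')).hasFDerivAt).comp_hasDerivAt t'
      ((hasDerivAt_const t' x').prodMk (hasDerivAt_id t'))
  have e1 : dt (dx f) x t = fderiv ℝ (fderiv ℝ F) (x, t) (0, 1) (1, 0) := by
    rw [hdx]
    show deriv (fun t' => fderiv ℝ F (x, t') (1, 0)) t = _
    refine HasDerivAt.deriv ?_
    exact (key (1, 0)).comp_hasDerivAt t ((hasDerivAt_const t x).prodMk (hasDerivAt_id t))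
  have e2 : dx (dt f) x t = fderiv ℝ (fderiv ℝ F) (x, t) (1, 0) (0, 1) := by
    rw [hdt]
    show deriv (fun x' => fderiv ℝ F (x', t) (0, 1)) x = _
    refine HasDerivAt.deriv ?_
    exact (key (0, 1)).comp_hasDerivAt x ((hasDerivAt_id x).prodMk (hasDerivAt_const x t))
  rw [e1, e2, hsymm]


lemma cdD {f : ℝ → ℝ} (hf : ContDiff ℝ ∞ f) : ContDiff ℝ ∞ (deriv f) :=
  (contDiff_infty_iff_deriv.mp hf).2

lemma hD {f : ℝ → ℝ} (hf : ContDiff ℝ ∞ f) (a : ℝ) : HasDerivAt f (deriv f a) a :=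
  (hf.differentiable (by norm_num) a).hasDerivAt

lemma lem_h1p {U Y : ℝ → ℝ} {t : ℝ} (hU : ContDiff ℝ ∞ U) (hY : ContDiff ℝ ∞ Y)
    (h1 : ∀ a, 3*t*(deriv (deriv (deriv U)) a + 6*U a*deriv U a - 4*deriv U a)
      + a*deriv U a + 2*U a - deriv Y a - 2 = 0) (a : ℝ) :
    3*t*(deriv (deriv (deriv (deriv U))) a + 6*deriv U a*deriv U a + 6*U a*deriv (deriv U) a
      - 4*deriv (deriv U) a) + 3*deriv U a + a*deriv (deriv U) a - deriv (deriv Y) a = 0 := by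
  have hU1 := cdD hU; have hU2 := cdD hU1; have hU3 := cdD hU2
  have hY1 := cdD hY
  have H : HasDerivAt (fun b => 3*t*(deriv (deriv (deriv U)) b + 6*U b*deriv U b - 4*deriv U b)
      + b*deriv U b + 2*U b - deriv Y b - 2)
      (3*t*(deriv (deriv (deriv (deriv U))) a
        + (6*deriv U a*deriv U a + 6*U a*deriv (deriv U) a) - 4*deriv (deriv U) a)
      + (1*deriv U a + a*deriv (deriv U) a) + 2*deriv U a - deriv (deriv Y) a) a :=
    (((((((hD hU3 a).add (((hD hU a).const_mul 6).mul (hD hU1 a))).sub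
      ((hD hU1 a).const_mul 4)).const_mul (3*t)).add
      ((hasDerivAt_id a).mul (hD hU1 a))).add ((hD hU a).const_mul 2)).sub (hD hY1 a)).sub_const 2
  rw [funext h1] at H
  have hc := H.unique (hasDerivAt_const a 0)
  linear_combination hc

lemma lem_h1pp {U Y : ℝ → ℝ} {t : ℝ} (hU : ContDiff ℝ ∞ U) (hY : ContDiff ℝ ∞ Y)
    (h1 : ∀ a, 3*t*(deriv (deriv (deriv U)) a + 6*U a*deriv U a - 4*deriv U a)
      + a*deriv U a + 2*U a - deriv Y a - 2 = 0) (a : ℝ) :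
    3*t*(deriv (deriv (deriv (deriv (deriv U)))) a
      + 18*deriv U a*deriv (deriv U) a + 6*U a*deriv (deriv (deriv U)) a
      - 4*deriv (deriv (deriv U)) a) + 4*deriv (deriv U) a + a*deriv (deriv (deriv U)) a
      - deriv (deriv (deriv Y)) a = 0 := by
  have hU1 := cdD hU; have hU2 := cdD hU1; have hU3 := cdD hU2; have hU4 := cdD hU3
  have hY1 := cdD hY; have hY2 := cdD hY1
  have h1p := lem_h1p hU hY h1
  have H : HasDerivAt (fun b => 3*t*(deriv (deriv (deriv (deriv U))) b
        + 6*deriv U b*deriv U b + 6*U b*deriv (deriv U) b - 4*deriv (deriv U) b)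
        + 3*deriv U b + b*deriv (deriv U) b - deriv (deriv Y) b)
      (3*t*(deriv (deriv (deriv (deriv (deriv U)))) a
        + (6*deriv (deriv U) a*deriv U a + 6*deriv U a*deriv (deriv U) a)
        + (6*deriv U a*deriv (deriv U) a + 6*U a*deriv (deriv (deriv U)) a)
        - 4*deriv (deriv (deriv U)) a)
      + 3*deriv (deriv U) a + (1*deriv (deriv U) a + a*deriv (deriv (deriv U)) a)
      - deriv (deriv (deriv Y)) a) a :=
    (((((((hD hU4 a).add (((hD hU1 a).const_mul 6).mul (hD hU1 a))).add
      (((hD hU a).const_mul 6).mul (hD hU2 a))).sub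
      ((hD hU2 a).const_mul 4)).const_mul (3*t)).add
      ((hD hU1 a).const_mul 3)).add
      ((hasDerivAt_id a).mul (hD hU2 a))).sub (hD hY2 a)
  rw [funext h1p] at H
  have hc := H.unique (hasDerivAt_const a 0)
  linear_combination hc

lemma lemC1 {U Y : ℝ → ℝ} {t : ℝ} (hU : ContDiff ℝ ∞ U) (hY : ContDiff ℝ ∞ Y)
    (h1 : ∀ a, 3*t*(deriv (deriv (deriv U)) a + 6*U a*deriv U a - 4*deriv U a)
      + a*deriv U a + 2*U a - deriv Y a - 2 = 0) (a : ℝ) :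
    deriv (fun b => Y b - 3*t*(deriv (deriv U) b + 3*(U b)^2) - b*U b + 2*(6*t*U b + b)) a
      = U a := by
  have hU1 := cdD hU; have hU2 := cdD hU1
  have H : HasDerivAt (fun b => Y b - 3*t*(deriv (deriv U) b + 3*(U b)^2) - b*U b
        + 2*(6*t*U b + b))
      (deriv Y a - 3*t*(deriv (deriv (deriv U)) a + 3*(2*U a^1*deriv U a))
        - (1*U a + a*deriv U a) + 2*(6*t*deriv U a + 1)) a :=
    (((hD hY a).sub (((hD hU2 a).add (((hD hU a).pow 2).const_mul 3)).const_mul (3*t))).sub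
      ((hasDerivAt_id a).mul (hD hU a))).add
      ((((hD hU a).const_mul (6*t)).add (hasDerivAt_id a)).const_mul 2)
  rw [H.deriv]
  linear_combination -(h1 a)

lemma lemC5 {U : ℝ → ℝ} (hU : ContDiff ℝ ∞ U) (a : ℝ) :
    deriv (deriv (fun b => deriv (deriv (deriv U)) b + 6*U b*deriv U b)) a
      = deriv (deriv (deriv (deriv (deriv U)))) a + 18*deriv U a*deriv (deriv U) a
        + 6*U a*deriv (deriv (deriv U)) a := by
  have hU1 := cdD hU; have hU2 := cdD hU1; have hU3 := cdD hU2; have hU4 := cdD hU3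
  have e1 : deriv (fun b => deriv (deriv (deriv U)) b + 6*U b*deriv U b)
      = fun b => deriv (deriv (deriv (deriv U))) b
        + (6*deriv U b*deriv U b + 6*U b*deriv (deriv U) b) :=
    funext fun b => ((hD hU3 b).add (((hD hU b).const_mul 6).mul (hD hU1 b))).deriv
  rw [e1]
  have H : HasDerivAt (fun b => deriv (deriv (deriv (deriv U))) b
        + (6*deriv U b*deriv U b + 6*U b*deriv (deriv U) b))
      (deriv (deriv (deriv (deriv (deriv U)))) a
        + ((6*deriv (deriv U) a*deriv U a + 6*deriv U a*deriv (deriv U) a)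
          + (6*deriv U a*deriv (deriv U) a + 6*U a*deriv (deriv (deriv U)) a))) a :=
    (hD hU4 a).add ((((hD hU1 a).const_mul 6).mul (hD hU1 a)).add
      (((hD hU a).const_mul 6).mul (hD hU2 a)))
  rw [H.deriv]
  ring

lemma lemC2 {U Y : ℝ → ℝ} {t : ℝ} (hU : ContDiff ℝ ∞ U) (hY : ContDiff ℝ ∞ Y)
    (h1 : ∀ a, 3*t*(deriv (deriv (deriv U)) a + 6*U a*deriv U a - 4*deriv U a)
      + a*deriv U a + 2*U a - deriv Y a - 2 = 0)
    (h2 : ∀ a, deriv (deriv (deriv Y)) a + 4*U a*deriv Y a + 2*deriv U a*Y a = 0) (a : ℝ) :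
    3*t*deriv (fun b => deriv (deriv (deriv (deriv U))) b + 10*U b*deriv (deriv U) b
        + 5*(deriv U b)^2 + 10*(U b)^3) a
      + a*deriv (fun b => deriv (deriv U) b + 3*(U b)^2) a
      + 4*deriv (deriv U) a + 8*(U a)^2
      + 2*deriv U a*(Y a - 3*t*(deriv (deriv U) a + 3*(U a)^2) - a*U a + 2*(6*t*U a + a))
      + (-4)*(3*t*deriv (fun b => deriv (deriv U) b + 3*(U b)^2) a + a*deriv U a + 2*U a)
      + 0*(6*t*deriv U a + 1) = 0 := by
  have hU1 := cdD hU; have hU2 := cdD hU1; have hU3 := cdD hU2; have hU4 := cdD hU3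
  have HA : HasDerivAt (fun b => deriv (deriv (deriv (deriv U))) b + 10*U b*deriv (deriv U) b
        + 5*(deriv U b)^2 + 10*(U b)^3)
      (deriv (deriv (deriv (deriv (deriv U)))) a
        + (10*deriv U a*deriv (deriv U) a + 10*U a*deriv (deriv (deriv U)) a)
        + 5*(2*deriv U a^1*deriv (deriv U) a) + 10*(3*U a^2*deriv U a)) a :=
    (((hD hU4 a).add (((hD hU a).const_mul 10).mul (hD hU2 a))).add
      (((hD hU1 a).pow 2).const_mul 5)).add (((hD hU a).pow 3).const_mul 10)
  have HB : HasDerivAt (fun b => deriv (deriv U) b + 3*(U b)^2)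
      (deriv (deriv (deriv U)) a + 3*(2*U a^1*deriv U a)) a :=
    (hD hU2 a).add (((hD hU a).pow 2).const_mul 3)
  rw [HA.deriv, HB.deriv]
  linear_combination (h2 a) + (lem_h1pp hU hY h1 a) + 4*U a*(h1 a)


/-- Second half of Proposition 2: a solution of the systems (Dx) and (Dt) gives,
via `v = y - 3t(u_xx + 3u²) - xu + 2(6tu + x)`, a solution of the potential
relations and of the constraint (eqt) with `k1 = -4`, `k2 = 0`. -/
theorem systems_to_eqt (u y : ℝ → ℝ → ℝ)
    (hu : ContDiff ℝ (⊤ : ℕ∞) (Function.uncurry u)) (hy : ContDiff ℝ (⊤ : ℕ∞) (Function.uncurry y))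
    (hDx : ∀ x t, DxEqAt u y x t) (hDt : ∀ x t, DtEqAt u y x t) :
    Potential u (fun x t => y x t - 3 * t * (dx (dx u) x t + 3 * (u x t) ^ 2)
        - x * u x t + 2 * (6 * t * u x t + x)) ∧
    Eqt (-4) 0 u (fun x t => y x t - 3 * t * (dx (dx u) x t + 3 * (u x t) ^ 2)
        - x * u x t + 2 * (6 * t * u x t + x)) := by
  classical
  have hu' : ContDiff ℝ ∞ (Function.uncurry u) := hu.of_le (by simp)
  have hy' : ContDiff ℝ ∞ (Function.uncurry y) := hy.of_le (by simp)
  refine ⟨fun x t => ⟨?_, ?_⟩, fun x t => ?_⟩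
  · -- v_x = u
    exact lemC1 (U := fun b => u b t) (Y := fun b => y b t) (t := t)
      (sliceX hu' t) (sliceX hy' t) (fun a => (hDx a t).1) x
  · -- v_t = u_xx + 3 u^2
    have h1s : ∀ a : ℝ, 3*t*(deriv (deriv (deriv (fun b => u b t))) a
        + 6*u a t*deriv (fun b => u b t) a - 4*deriv (fun b => u b t) a)
        + a*deriv (fun b => u b t) a + 2*u a t - deriv (fun b => y b t) a - 2 = 0 :=
      fun a => (hDx a t).1
    have hpp : 3*t*(deriv (deriv (deriv (deriv (deriv (fun b => u b t))))) x
        + 18*deriv (fun b => u b t) x*deriv (deriv (fun b => u b t)) x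
        + 6*u x t*deriv (deriv (deriv (fun b => u b t))) x
        - 4*deriv (deriv (deriv (fun b => u b t))) x)
        + 4*deriv (deriv (fun b => u b t)) x + x*deriv (deriv (deriv (fun b => u b t))) x
        - deriv (deriv (deriv (fun b => y b t))) x = 0 :=
      lem_h1pp (sliceX hu' t) (sliceX hy' t) h1s x
    have hdtu : dt u x t = deriv (deriv (deriv (fun b => u b t))) x
        + 6*u x t*deriv (fun b => u b t) x := (hDt x t).1
    have hdty : dt y x t = deriv (deriv (deriv (fun b => y b t))) x
        + 6*u x t*deriv (fun b => y b t) x := by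
      have a1 : dt y x t = 2*u x t*deriv (fun b => y b t) x
          - 2*deriv (fun b => u b t) x*y x t := (hDt x t).2
      have a2 : deriv (deriv (deriv (fun b => y b t))) x
          + 4*u x t*deriv (fun b => y b t) x
          + 2*deriv (fun b => u b t) x*y x t = 0 := (hDx x t).2
      linear_combination a1 - a2
    have hdtW : dt (dx (dx u)) x t
        = deriv (deriv (deriv (deriv (deriv (fun b => u b t))))) x
          + 18*deriv (fun b => u b t) x*deriv (deriv (fun b => u b t)) x
          + 6*u x t*deriv (deriv (deriv (fun b => u b t))) x := by
      have c1 : dt (dx (dx u)) x t = dx (dt (dx u)) x t := clairaut (contDiff_dx hu') x t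
      have c2 : dt (dx u) = dx (dt u) := funext fun a => funext fun b => clairaut hu' a b
      have c3 : dt u = fun x t => dx (dx (dx u)) x t + 6*u x t*dx u x t :=
        funext fun a => funext fun b => (hDt a b).1
      rw [c1, c2, c3]
      exact lemC5 (U := fun b => u b t) (sliceX hu' t) x
    have hut : HasDerivAt (fun t' => u x t') (dt u x t) t :=
      ((sliceT hu' x).differentiable (by norm_num) t).hasDerivAt
    have hyt : HasDerivAt (fun t' => y x t') (dt y x t) t :=
      ((sliceT hy' x).differentiable (by norm_num) t).hasDerivAt
    have hWt : HasDerivAt (fun t' => deriv (deriv (fun b => u b t')) x)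
        (dt (dx (dx u)) x t) t :=
      ((sliceT (contDiff_dx (contDiff_dx hu')) x).differentiable (by norm_num) t).hasDerivAt
    have H : HasDerivAt (fun t' => y x t' - 3*t'*(deriv (deriv (fun b => u b t')) x
          + 3*(u x t')^2) - x*u x t' + 2*(6*t'*u x t' + x))
        (dt y x t - (3*1*(deriv (deriv (fun b => u b t)) x + 3*(u x t)^2)
          + 3*t*(dt (dx (dx u)) x t + 3*(2*(u x t)^1*dt u x t)))
          - x*dt u x t + 2*(6*1*u x t + 6*t*dt u x t)) t :=
      ((hyt.sub (((hasDerivAt_id t).const_mul 3).mul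
        (hWt.add ((hut.pow 2).const_mul 3)))).sub (hut.const_mul x)).add
        (((((hasDerivAt_id t).const_mul 6).mul hut).add_const x).const_mul 2)
    have e : dt (fun x t => y x t - 3 * t * (dx (dx u) x t + 3 * (u x t) ^ 2)
        - x * u x t + 2 * (6 * t * u x t + x)) x t = _ := H.deriv
    rw [e, show dx (dx u) x t = deriv (deriv (fun b => u b t)) x from rfl]
    linear_combination hdty - 3*t*hdtW + (-18*t*(u x t) - x + 12*t)*hdtu
      - hpp - 6*(u x t)*(h1s x)
  · -- equation (eqt)
    exact lemC2 (U := fun b => u b t) (Y := fun b => y b t) (t := t)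
      (sliceX hu' t) (sliceX hy' t) (fun a => (hDx a t).1) (fun a => (hDx a t).2) x
end

section
/- H0 is a first integral: Let u, y : ℝ × ℝ → ℝ be smooth functions such that u_t = u_xxx + 6u u_x, y_xxx + 4u y_x + 2u_x y = 0, and y_t = 2u y_x − 2u_x y hold identically on ℝ × ℝ. Then the function H0 := 2y y_xx − y_x² + 4u y² is constant on ℝ × ℝ (both its x-derivative and its t-derivative vanish identically). -/
section Helpers
open Function

lemma dx_eq_fderiv (f : ℝ → ℝ → ℝ) (hf : ContDiff ℝ (⊤ : ℕ∞) (uncurry f)) (x t : ℝ) :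
    dx f x t = fderiv ℝ (uncurry f) (x, t) (1, 0) := by
  have h1 : HasDerivAt (fun x' : ℝ => (x', t)) ((1 : ℝ), (0 : ℝ)) x :=
    (hasDerivAt_id x).prodMk (hasDerivAt_const x t)
  have h2 : HasFDerivAt (uncurry f) (fderiv ℝ (uncurry f) (x, t)) (x, t) :=
    (hf.differentiable (by simp) (x, t)).hasFDerivAt
  exact (h2.comp_hasDerivAt x h1).deriv

lemma dt_eq_fderiv (f : ℝ → ℝ → ℝ) (hf : ContDiff ℝ (⊤ : ℕ∞) (uncurry f)) (x t : ℝ) :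
    dt f x t = fderiv ℝ (uncurry f) (x, t) (0, 1) := by
  have h1 : HasDerivAt (fun t' : ℝ => (x, t')) ((0 : ℝ), (1 : ℝ)) t :=
    (hasDerivAt_const t x).prodMk (hasDerivAt_id t)
  have h2 : HasFDerivAt (uncurry f) (fderiv ℝ (uncurry f) (x, t)) (x, t) :=
    (hf.differentiable (by simp) (x, t)).hasFDerivAt
  exact (h2.comp_hasDerivAt t h1).deriv

lemma smooth_dx (f : ℝ → ℝ → ℝ) (hf : ContDiff ℝ (⊤ : ℕ∞) (uncurry f)) :
    ContDiff ℝ (⊤ : ℕ∞) (uncurry (dx f)) := by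
  have : uncurry (dx f) = fun p : ℝ × ℝ => fderiv ℝ (uncurry f) p (1, 0) := by
    funext p; exact dx_eq_fderiv f hf p.1 p.2
  rw [this]
  exact (hf.fderiv_right (by simp)).clm_apply contDiff_const

lemma dt_dx_comm (f : ℝ → ℝ → ℝ) (hf : ContDiff ℝ (⊤ : ℕ∞) (uncurry f)) (x t : ℝ) :
    dt (dx f) x t = dx (dt f) x t := by
  set F := uncurry f with hF
  have hd : ∀ p, HasFDerivAt F (fderiv ℝ F p) p := fun p =>
    (hf.differentiable (by simp) p).hasFDerivAt
  have hd2 : HasFDerivAt (fderiv ℝ F) (fderiv ℝ (fderiv ℝ F) (x, t)) (x, t) :=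
    (((hf.fderiv_right (m := 1) (by exact WithTop.coe_le_coe.mpr le_top)).differentiable (by simp)) (x, t)).hasFDerivAt
  have hsymm := second_derivative_symmetric hd hd2 ((0 : ℝ), (1 : ℝ)) ((1 : ℝ), (0 : ℝ))
  have e1 : dt (dx f) x t = fderiv ℝ (fderiv ℝ F) (x, t) (0, 1) (1, 0) := by
    have h := (ContinuousLinearMap.apply ℝ ℝ ((1 : ℝ), (0 : ℝ))).hasFDerivAt.comp (x, t) hd2
    have hline : HasDerivAt (fun t' : ℝ => (x, t')) ((0 : ℝ), (1 : ℝ)) t :=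
      (hasDerivAt_const t x).prodMk (hasDerivAt_id t)
    have h2 := h.comp_hasDerivAt t hline
    have e : dt (dx f) x t = deriv (fun t' => fderiv ℝ F (x, t') ((1 : ℝ), (0 : ℝ))) t := by
      show deriv (fun t' => dx f x t') t = _
      congr 1
      funext t'
      exact dx_eq_fderiv f hf x t'
    rw [e]
    exact h2.deriv
  have e2 : dx (dt f) x t = fderiv ℝ (fderiv ℝ F) (x, t) (1, 0) (0, 1) := by
    have h := (ContinuousLinearMap.apply ℝ ℝ ((0 : ℝ), (1 : ℝ))).hasFDerivAt.comp (x, t) hd2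
    have hline : HasDerivAt (fun x' : ℝ => (x', t)) ((1 : ℝ), (0 : ℝ)) x :=
      (hasDerivAt_id x).prodMk (hasDerivAt_const x t)
    have h2 := h.comp_hasDerivAt x hline
    have e : dx (dt f) x t = deriv (fun x' => fderiv ℝ F (x', t) ((0 : ℝ), (1 : ℝ))) x := by
      show deriv (fun x' => dt f x' t) x = _
      congr 1
      funext x'
      exact dt_eq_fderiv f hf x' t
    rw [e]
    exact h2.deriv
  rw [e1, e2, hsymm]

lemma hasDerivAt_dx (f : ℝ → ℝ → ℝ) (hf : ContDiff ℝ (⊤ : ℕ∞) (uncurry f)) (a b : ℝ) :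
    HasDerivAt (fun x' => f x' b) (dx f a b) a :=
  (((hf.comp (contDiff_id.prodMk contDiff_const)).differentiable (by simp)) a).hasDerivAt

lemma hasDerivAt_dt (f : ℝ → ℝ → ℝ) (hf : ContDiff ℝ (⊤ : ℕ∞) (uncurry f)) (a b : ℝ) :
    HasDerivAt (fun t' => f a t') (dt f a b) b :=
  (((hf.comp (contDiff_const.prodMk contDiff_id)).differentiable (by simp)) b).hasDerivAt

end Helpers

/-- `H0 = 2 y y_xx - y_x² + 4 u y²` is a first integral: both its `x`- and
`t`-derivatives vanish identically for solutions of the relevant equations. -/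
theorem H0_first_integral (u y : ℝ → ℝ → ℝ)
    (hu : ContDiff ℝ (⊤ : ℕ∞) (Function.uncurry u)) (hy : ContDiff ℝ (⊤ : ℕ∞) (Function.uncurry y))
    (hkdv : ∀ x t, dt u x t = dx (dx (dx u)) x t + 6 * u x t * dx u x t)
    (hy3 : ∀ x t, dx (dx (dx y)) x t + 4 * u x t * dx y x t + 2 * dx u x t * y x t = 0)
    (hyt : ∀ x t, dt y x t = 2 * u x t * dx y x t - 2 * dx u x t * y x t) :
    (∀ x t, dx (H0expr u y) x t = 0) ∧ (∀ x t, dt (H0expr u y) x t = 0) := by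
  have hu1 := smooth_dx u hu
  have hu2 := smooth_dx _ hu1
  have hyy1 := smooth_dx y hy
  have hyy2 := smooth_dx _ hyy1
  constructor
  · intro x t
    have hA := ((hasDerivAt_dx y hy x t).const_mul (2:ℝ)).mul
      (hasDerivAt_dx (dx (dx y)) hyy2 x t)
    have hB := (hasDerivAt_dx (dx y) hyy1 x t).pow 2
    have hC := ((hasDerivAt_dx u hu x t).const_mul (4:ℝ)).mul ((hasDerivAt_dx y hy x t).pow 2)
    have H' := (hA.sub hB).add hC
    have key : dx (H0expr u y) x t = _ := H'.deriv
    rw [key]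
    push_cast
    simp only [Pi.pow_apply]
    linear_combination 2 * y x t * hy3 x t
  · intro x t
    have h1t : ∀ a b, dx (dt y) a b =
        2 * dx u a b * dx y a b + 2 * u a b * dx (dx y) a b -
          (2 * dx (dx u) a b * y a b + 2 * dx u a b * dx y a b) := by
      intro a b
      have e : dx (dt y) a b =
          deriv (fun x' => 2 * u x' b * dx y x' b - 2 * dx u x' b * y x' b) a := by
        show deriv (fun x' => dt y x' b) a = _
        congr 1
        funext x'
        exact hyt x' b
      rw [e]
      have hA := ((hasDerivAt_dx u hu a b).const_mul (2:ℝ)).mul (hasDerivAt_dx (dx y) hyy1 a b)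
      have hB := ((hasDerivAt_dx (dx u) hu1 a b).const_mul (2:ℝ)).mul (hasDerivAt_dx y hy a b)
      exact (hA.sub hB).deriv.trans (by ring)
    have hdtdxy : dt (dx y) = dx (dt y) :=
      funext fun a => funext fun b => dt_dx_comm y hy a b
    have h2t : dt (dx (dx y)) x t =
        2 * dx (dx u) x t * dx y x t + 4 * dx u x t * dx (dx y) x t +
          2 * u x t * dx (dx (dx y)) x t - 2 * dx (dx (dx u)) x t * y x t -
          4 * dx (dx u) x t * dx y x t - 2 * dx u x t * dx (dx y) x t := by
      have e0 : dt (dx (dx y)) x t = dx (dt (dx y)) x t := dt_dx_comm (dx y) hyy1 x t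
      rw [e0, hdtdxy]
      have e : dx (dx (dt y)) x t =
          deriv (fun x' => 2 * dx u x' t * dx y x' t + 2 * u x' t * dx (dx y) x' t -
            (2 * dx (dx u) x' t * y x' t + 2 * dx u x' t * dx y x' t)) x := by
        show deriv (fun x' => dx (dt y) x' t) x = _
        congr 1
        funext x'
        exact h1t x' t
      rw [e]
      have hA := ((hasDerivAt_dx (dx u) hu1 x t).const_mul (2:ℝ)).mul
        (hasDerivAt_dx (dx y) hyy1 x t)
      have hB := ((hasDerivAt_dx u hu x t).const_mul (2:ℝ)).mul
        (hasDerivAt_dx (dx (dx y)) hyy2 x t)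
      have hC := ((hasDerivAt_dx (dx (dx u)) hu2 x t).const_mul (2:ℝ)).mul
        (hasDerivAt_dx y hy x t)
      have hD := ((hasDerivAt_dx (dx u) hu1 x t).const_mul (2:ℝ)).mul
        (hasDerivAt_dx (dx y) hyy1 x t)
      exact ((hA.add hB).sub (hC.add hD)).deriv.trans (by ring)
    have h1t' : dt (dx y) x t =
        2 * dx u x t * dx y x t + 2 * u x t * dx (dx y) x t -
          (2 * dx (dx u) x t * y x t + 2 * dx u x t * dx y x t) := by
      rw [hdtdxy]; exact h1t x t
    have hA := ((hasDerivAt_dt y hy x t).const_mul (2:ℝ)).mul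
      (hasDerivAt_dt (dx (dx y)) hyy2 x t)
    have hB := (hasDerivAt_dt (dx y) hyy1 x t).pow 2
    have hC := ((hasDerivAt_dt u hu x t).const_mul (4:ℝ)).mul ((hasDerivAt_dt y hy x t).pow 2)
    have H' := (hA.sub hB).add hC
    have key : dt (H0expr u y) x t = _ := H'.deriv
    rw [key]
    push_cast
    simp only [Pi.pow_apply]
    rw [h1t', h2t, hyt x t, hkdv x t]
    linear_combination 4 * u x t * y x t * hy3 x t
end
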